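/- a₁₁ᵀ·a₂₂ − a₂₁ᵀ·a₁₂ = ψ₁ψ₂·1ₙ − ψ₁·s_xz·(ξ*·z*) + s̄·s_xz·(z·z*) + ψ₁·(ξ*·ξ) − s̄·(z·ξ). (This is the (1,2)-block of A'ᵀ·S·A' for the 2n×2n matrix A' with blocks [[a₁₁,a₁₂],[a₂₁,a₂₂]] and S = [[0,1ₙ],[−1ₙ,0]].) -/

import Mathlib

/-! The identity is polynomial in `z`, `ξ`, `z̄`, `ξ̄` and the scalars: expanding the products,
every product of two rank-one matrices collapses to a dot product times a rank-one matrix, and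
only the four dot products `z̄ ⬝ z = ψ₁ - 1`, `ξ̄ ⬝ ξ = ψ₂ - |s_xz|²`, `ξ ⬝ z = s - s_xz` and its
conjugate occur. So the identity holds over any commutative ring once those four relations do. -/

open Matrix

lemma Complex.star_dotProduct_self {ι : Type*} [Fintype ι] (v : ι → ℂ) :
    star v ⬝ᵥ v = ((∑ i, Complex.normSq (v i) : ℝ) : ℂ) := by
  simp only [dotProduct, Pi.star_apply, Complex.star_def, Complex.ofReal_sum,
    Complex.normSq_eq_conj_mul_self]

theorem Matrix.transpose_mul_sub_transpose_mul_of_dotProduct {R ι : Type*} [CommRing R]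
    [Fintype ι] [DecidableEq ι] (z ξ z' ξ' : ι → R) (s s' t t' ψ₁ ψ₂ : R)
    (hz : z' ⬝ᵥ z = ψ₁ - 1) (hξ : ξ' ⬝ᵥ ξ = ψ₂ - t * t') (hξz : ξ ⬝ᵥ z = s - t)
    (hξz' : ξ' ⬝ᵥ z' = s' - t') :
    (ψ₂ • 1 - t • vecMulVec z' ξ' - t' • vecMulVec ξ z + ψ₁ • vecMulVec ξ ξ')ᵀ
          * (ψ₁ • (1 + vecMulVec z z'))
        - (ψ₁ • vecMulVec z ξ' + vecMulVec ξ' z - t' • vecMulVec z z)ᵀ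
          * (ψ₁ • vecMulVec ξ z' + vecMulVec z' ξ - t • vecMulVec z' z')
      = (ψ₁ * ψ₂) • (1 : Matrix ι ι R) - (ψ₁ * t) • vecMulVec ξ' z'
          + (s' * t) • vecMulVec z z' + ψ₁ • vecMulVec ξ' ξ - s' • vecMulVec z ξ := by
  have hz_comm : z ⬝ᵥ z' = ψ₁ - 1 := by rw [dotProduct_comm, hz]
  have hξz_comm : z ⬝ᵥ ξ = s - t := by rw [dotProduct_comm, hξz]
  simp only [transpose_add, transpose_sub, transpose_smul, transpose_one, transpose_vecMulVec,
    Matrix.add_mul, Matrix.sub_mul, Matrix.mul_add, Matrix.mul_sub, Matrix.smul_mul,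
    Matrix.mul_smul, Matrix.one_mul, Matrix.mul_one, vecMulVec_mul_vecMulVec, vecMulVec_smul,
    smul_smul, hz, hz_comm, hξ, hξz, hξz_comm, hξz']
  module

theorem stmt_19_general (n : ℕ) (s : ℂ) (z ξ : Fin n → ℂ) :
    let sxz : ℂ := s - ∑ i, ξ i * z i
    let ψ₁r : ℝ := (∑ i, Complex.normSq (z i)) + 1
    let ψ₂r : ℝ := (∑ i, Complex.normSq (ξ i)) + Complex.normSq sxz
    let τr : ℝ := ψ₁r * ψ₂r
    let τ₀r : ℝ := Complex.normSq s
    let ψ₁ : ℂ := (ψ₁r : ℂ)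
    let ψ₂ : ℂ := (ψ₂r : ℂ)
    let τ : ℂ := (τr : ℂ)
    let τ₀ : ℂ := (τ₀r : ℂ)
    let a11 : Matrix (Fin n) (Fin n) ℂ :=
      ψ₂ • 1 - sxz • Matrix.vecMulVec (star z) (star ξ)
        - star sxz • Matrix.vecMulVec ξ z + ψ₁ • Matrix.vecMulVec ξ (star ξ)
    let a12 : Matrix (Fin n) (Fin n) ℂ :=
      ψ₁ • Matrix.vecMulVec ξ (star z) + Matrix.vecMulVec (star z) ξ
        - sxz • Matrix.vecMulVec (star z) (star z)
    let a21 : Matrix (Fin n) (Fin n) ℂ :=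
      ψ₁ • Matrix.vecMulVec z (star ξ) + Matrix.vecMulVec (star ξ) z
        - star sxz • Matrix.vecMulVec z z
    let a22 : Matrix (Fin n) (Fin n) ℂ := ψ₁ • (1 + Matrix.vecMulVec z (star z))
    let A' : Matrix (Fin n ⊕ Fin n) (Fin n ⊕ Fin n) ℂ := Matrix.fromBlocks a11 a12 a21 a22
    let b : Fin n ⊕ Fin n → ℂ :=
      Sum.elim (fun i => ψ₂ * star (z i) - ψ₁ * star sxz * ξ i)
               (fun i => ψ₁ * (star (ξ i) - star sxz * z i))
    a11ᵀ * a22 - a21ᵀ * a12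
      = (ψ₁ * ψ₂) • (1 : Matrix (Fin n) (Fin n) ℂ)
          - (ψ₁ * sxz) • Matrix.vecMulVec (star ξ) (star z)
          + (star s * sxz) • Matrix.vecMulVec z (star z)
          + ψ₁ • Matrix.vecMulVec (star ξ) ξ
          - star s • Matrix.vecMulVec z ξ := by
  intro sxz ψ₁r ψ₂r _ _ ψ₁ ψ₂ _ _ _ _ _ _ _ _
  have hξz : ξ ⬝ᵥ z = s - sxz := by simp only [sxz, dotProduct, sub_sub_cancel]
  have hz : star z ⬝ᵥ z = ψ₁ - 1 := by
    simp only [Complex.star_dotProduct_self, ψ₁, ψ₁r, Complex.ofReal_add, Complex.ofReal_one,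
      add_sub_cancel_right]
  have hξ : star ξ ⬝ᵥ ξ = ψ₂ - sxz * star sxz := by
    simp only [Complex.star_dotProduct_self, ψ₂, ψ₂r, Complex.ofReal_add, Complex.star_def,
      Complex.mul_conj, add_sub_cancel_right]
  have hξz' : star ξ ⬝ᵥ star z = star s - star sxz := by
    rw [star_dotProduct_star, dotProduct_comm, hξz, star_sub]
  exact transpose_mul_sub_transpose_mul_of_dotProduct z ξ (star z) (star ξ) s (star s) sxz
    (star sxz) ψ₁ ψ₂ hz hξ hξz hξz'

theorem stmt_19 (n : ℕ) (hn : 1 ≤ n) (s : ℂ) (z ξ : Fin n → ℂ) :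
    let sxz : ℂ := s - ∑ i, ξ i * z i
    let ψ₁r : ℝ := (∑ i, Complex.normSq (z i)) + 1
    let ψ₂r : ℝ := (∑ i, Complex.normSq (ξ i)) + Complex.normSq sxz
    let τr : ℝ := ψ₁r * ψ₂r
    let τ₀r : ℝ := Complex.normSq s
    let ψ₁ : ℂ := (ψ₁r : ℂ)
    let ψ₂ : ℂ := (ψ₂r : ℂ)
    let τ : ℂ := (τr : ℂ)
    let τ₀ : ℂ := (τ₀r : ℂ)
    let a11 : Matrix (Fin n) (Fin n) ℂ :=
      ψ₂ • 1 - sxz • Matrix.vecMulVec (star z) (star ξ)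
        - star sxz • Matrix.vecMulVec ξ z + ψ₁ • Matrix.vecMulVec ξ (star ξ)
    let a12 : Matrix (Fin n) (Fin n) ℂ :=
      ψ₁ • Matrix.vecMulVec ξ (star z) + Matrix.vecMulVec (star z) ξ
        - sxz • Matrix.vecMulVec (star z) (star z)
    let a21 : Matrix (Fin n) (Fin n) ℂ :=
      ψ₁ • Matrix.vecMulVec z (star ξ) + Matrix.vecMulVec (star ξ) z
        - star sxz • Matrix.vecMulVec z z
    let a22 : Matrix (Fin n) (Fin n) ℂ := ψ₁ • (1 + Matrix.vecMulVec z (star z))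
    let A' : Matrix (Fin n ⊕ Fin n) (Fin n ⊕ Fin n) ℂ := Matrix.fromBlocks a11 a12 a21 a22
    let b : Fin n ⊕ Fin n → ℂ :=
      Sum.elim (fun i => ψ₂ * star (z i) - ψ₁ * star sxz * ξ i)
               (fun i => ψ₁ * (star (ξ i) - star sxz * z i))
    a11ᵀ * a22 - a21ᵀ * a12
      = (ψ₁ * ψ₂) • (1 : Matrix (Fin n) (Fin n) ℂ)
          - (ψ₁ * sxz) • Matrix.vecMulVec (star ξ) (star z)
          + (star s * sxz) • Matrix.vecMulVec z (star z)
          + ψ₁ • Matrix.vecMulVec (star ξ) ξ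
          - star s • Matrix.vecMulVec z ξ :=
  stmt_19_general n s z ξ
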